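/- The function x ↦ ν(x)·(ν(x) − x)² is strictly decreasing on (0, ∞), where ν = 1/V_0. Consequently sup_{x≥0} (ν'(x))²/(4ν(x)) = ν(0)³ = π^{-3/2}. -/

import Mathlib

/-!
With `G(x) = ∫_x^∞ e^{-t²} dt` one has `ν = e^{-x²} / (2G)` and `ν' = 2ν(ν - x)`, hence
`(ν(ν - x)²)' = 2ν(ν - x)(3ν² - 4νx + x² - 1)`. The quadratic factor is negative for `ν` strictly
between its roots `(2x ± √(x² + 3)) / 3`, and the smaller root lies below `x`, so it suffices that
`x < ν(x) < (2x + √(x² + 3)) / 3` for `x > 0`. Both bounds follow by comparing `ν` with these two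
functions through the Riccati equation, whose boundary condition sits at `+∞`. Finally
`ν'² / (4ν) = ν(ν - x)²`, so its supremum over `x ≥ 0` is attained at `0`, where it is
`ν(0)³ = π^{-3/2}` since `G(0) = √π / 2`.
-/

noncomputable def V0 (x : ℝ) : ℝ := 2 * Real.exp (x^2) * ∫ t in Set.Ioi x, Real.exp (-t^2)

noncomputable def nu (x : ℝ) : ℝ := 1 / V0 x

open Real Set Filter Topology MeasureTheory

theorem StrictAntiOn.lt_of_tendsto {α β : Type*} [LinearOrder α] [NoMaxOrder α]
    [TopologicalSpace β] [Preorder β] [OrderClosedTopology β] {f : α → β} {a : β} {x : α}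
    (hf : StrictAntiOn f (Ici x)) (hlim : Tendsto f atTop (𝓝 a)) : a < f x := by
  have : Nonempty α := ⟨x⟩
  obtain ⟨y, hxy⟩ := exists_gt x
  have hay : a ≤ f y := le_of_tendsto hlim <| (eventually_ge_atTop y).mono fun z hyz =>
    hf.antitoneOn hxy.le (hxy.le.trans hyz) hyz
  exact hay.trans_lt (hf self_mem_Ici hxy.le hxy)

theorem pos_of_hasDerivAt_neg_of_tendsto_zero {φ φ' : ℝ → ℝ} {x : ℝ}
    (hφ : ∀ y ∈ Ici x, HasDerivAt φ (φ' y) y) (hφ' : ∀ y ∈ Ioi x, φ' y < 0)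
    (hlim : Tendsto φ atTop (𝓝 0)) : 0 < φ x := by
  refine StrictAntiOn.lt_of_tendsto ?_ hlim
  refine strictAntiOn_of_hasDerivWithinAt_neg (f' := φ') (convex_Ici x)
    (fun y hy => (hφ y hy).continuousAt.continuousWithinAt) (fun y hy => ?_) ?_
  · rw [interior_Ici] at hy ⊢
    exact (hφ y (mem_Ici_of_Ioi hy)).hasDerivWithinAt
  · simpa only [interior_Ici] using hφ'

section IntegralIoi

variable {E : Type*} [NormedAddCommGroup E] [NormedSpace ℝ E] {f : ℝ → E}

theorem hasDerivAt_integral_Ioi [CompleteSpace E] (hf : Integrable f) {x : ℝ}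
    (hfx : ContinuousAt f x) :
    HasDerivAt (fun a => ∫ t in Ioi a, f t) (-f x) x := by
  have hsplit : (fun a => ∫ t in Ioi a, f t) = fun a => (∫ t in Ioi 0, f t) - ∫ t in 0..a, f t := by
    funext a
    rw [← intervalIntegral.integral_Ioi_sub_Ioi' hf.integrableOn hf.integrableOn, sub_sub_cancel]
  rw [hsplit]
  exact (intervalIntegral.integral_hasDerivAt_right hf.intervalIntegrable
    hf.aestronglyMeasurable.stronglyMeasurableAtFilter hfx).const_sub _

theorem tendsto_integral_Ioi_atTop (hf : Integrable f) :
    Tendsto (fun a => ∫ t in Ioi a, f t) atTop (𝓝 0) := by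
  have h := (intervalIntegral_tendsto_integral_Ioi 0 hf.integrableOn tendsto_id).const_sub
    (∫ t in Ioi 0, f t)
  rw [sub_self] at h
  refine h.congr fun a => ?_
  rw [← intervalIntegral.integral_Ioi_sub_Ioi' hf.integrableOn hf.integrableOn, sub_sub_cancel]
  rfl

end IntegralIoi

noncomputable def gaussTail (x : ℝ) : ℝ := ∫ t in Ioi x, exp (-t ^ 2)

theorem integrable_exp_neg_sq : Integrable fun t : ℝ => exp (-t ^ 2) := by
  simpa using integrable_exp_neg_mul_sq (b := 1) one_pos

theorem gaussTail_pos (x : ℝ) : 0 < gaussTail x := by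
  refine (setIntegral_pos_iff_support_of_nonneg_ae (Eventually.of_forall fun t => (exp_pos _).le)
    integrable_exp_neg_sq.integrableOn).2 ?_
  simp [Function.support, exp_ne_zero]

theorem gaussTail_zero : gaussTail 0 = √π / 2 := by
  rw [gaussTail]
  simpa using integral_gaussian_Ioi 1

theorem hasDerivAt_gaussTail (x : ℝ) : HasDerivAt gaussTail (-exp (-x ^ 2)) x :=
  hasDerivAt_integral_Ioi integrable_exp_neg_sq (by fun_prop)

theorem tendsto_gaussTail_atTop : Tendsto gaussTail atTop (𝓝 0) :=
  tendsto_integral_Ioi_atTop integrable_exp_neg_sq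

theorem nu_eq (x : ℝ) : nu x = exp (-x ^ 2) / (2 * gaussTail x) := by
  rw [nu, V0, exp_neg]
  change 1 / (2 * exp (x ^ 2) * gaussTail x) = _
  field_simp

theorem nu_pos (x : ℝ) : 0 < nu x := by
  rw [nu_eq]; have := gaussTail_pos x; positivity

theorem nu_zero : nu 0 = (√π)⁻¹ := by
  rw [nu_eq, gaussTail_zero]
  norm_num

theorem hasDerivAt_nu (x : ℝ) : HasDerivAt nu (2 * nu x * (nu x - x)) x := by
  rw [show nu = fun y => exp (-y ^ 2) / (2 * gaussTail y) from funext nu_eq]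
  have hG := gaussTail_pos x
  have he : HasDerivAt (fun y => exp (-y ^ 2)) (-(2 * x) * exp (-x ^ 2)) x := by
    simpa [mul_comm] using ((hasDerivAt_pow 2 x).neg).exp
  refine (he.div ((hasDerivAt_gaussTail x).const_mul 2) (by positivity)).congr_deriv ?_
  field_simp
  ring

section RiccatiComparison

variable {u u' : ℝ → ℝ} {x : ℝ}

theorem hasDerivAt_gaussTail_sub_div {y : ℝ} (hu : HasDerivAt u (u' y) y) (hpos : 0 < u y) :
    HasDerivAt (fun z => gaussTail z - exp (-z ^ 2) / (2 * u z))
      (exp (-y ^ 2) * (u' y - 2 * u y * (u y - y)) / (2 * u y ^ 2)) y := by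
  have he : HasDerivAt (fun z => exp (-z ^ 2)) (-(2 * y) * exp (-y ^ 2)) y := by
    simpa [mul_comm] using ((hasDerivAt_pow 2 y).neg).exp
  refine ((hasDerivAt_gaussTail y).sub (he.div (hu.const_mul 2) (by positivity))).congr_deriv ?_
  field_simp
  ring

theorem tendsto_gaussTail_sub_div (htop : Tendsto u atTop atTop) :
    Tendsto (fun z => gaussTail z - exp (-z ^ 2) / (2 * u z)) atTop (𝓝 0) := by
  have he : Tendsto (fun z : ℝ => exp (-z ^ 2)) atTop (𝓝 0) :=
    tendsto_exp_neg_atTop_nhds_zero.comp (tendsto_pow_atTop two_ne_zero)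
  simpa using tendsto_gaussTail_atTop.sub (he.div_atTop (htop.const_mul_atTop two_pos))

theorem nu_lt_iff {c : ℝ} (hc : 0 < c) : nu x < c ↔ exp (-x ^ 2) / (2 * c) < gaussTail x := by
  have hG := gaussTail_pos x
  rw [nu_eq, div_lt_iff₀ (by positivity), div_lt_iff₀ (by positivity)]
  constructor <;> intro h <;> linarith

theorem lt_nu_iff {c : ℝ} (hc : 0 < c) : c < nu x ↔ gaussTail x < exp (-x ^ 2) / (2 * c) := by
  have hG := gaussTail_pos x
  rw [nu_eq, lt_div_iff₀ (by positivity), lt_div_iff₀ (by positivity)]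
  constructor <;> intro h <;> linarith

/-- `ν` solves `ν' = 2ν(ν - x)` with its boundary condition at `+∞`, so comparison runs backwards
from infinity: it is carried out on `gaussTail - exp (-x²) / (2u)`, which tends to `0` and whose
derivative has the sign of `u' - 2u(u - x)`. -/
theorem nu_lt_of_deriv_lt_riccati (hu : ∀ y ∈ Ici x, HasDerivAt u (u' y) y)
    (hpos : ∀ y ∈ Ici x, 0 < u y) (htop : Tendsto u atTop atTop)
    (hsub : ∀ y ∈ Ioi x, u' y < 2 * u y * (u y - y)) : nu x < u x := by
  rw [nu_lt_iff (hpos x self_mem_Ici), ← sub_pos]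
  refine pos_of_hasDerivAt_neg_of_tendsto_zero
    (φ := fun z => gaussTail z - exp (-z ^ 2) / (2 * u z))
    (fun y hy => hasDerivAt_gaussTail_sub_div (hu y hy) (hpos y hy)) (fun y hy => ?_)
    (tendsto_gaussTail_sub_div htop)
  have := hpos y (mem_Ici_of_Ioi hy)
  exact div_neg_of_neg_of_pos (mul_neg_of_pos_of_neg (exp_pos _) (sub_neg.2 (hsub y hy)))
    (by positivity)

theorem lt_nu_of_riccati_lt_deriv (hu : ∀ y ∈ Ici x, HasDerivAt u (u' y) y)
    (hpos : ∀ y ∈ Ici x, 0 < u y) (htop : Tendsto u atTop atTop)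
    (hsuper : ∀ y ∈ Ioi x, 2 * u y * (u y - y) < u' y) : u x < nu x := by
  rw [lt_nu_iff (hpos x self_mem_Ici), ← sub_pos, ← neg_sub]
  refine pos_of_hasDerivAt_neg_of_tendsto_zero
    (φ := fun z => -(gaussTail z - exp (-z ^ 2) / (2 * u z)))
    (fun y hy => (hasDerivAt_gaussTail_sub_div (hu y hy) (hpos y hy)).neg) (fun y hy => ?_)
    (by simpa only [neg_zero] using (tendsto_gaussTail_sub_div htop).neg)
  have := hpos y (mem_Ici_of_Ioi hy)
  exact neg_neg_of_pos <| div_pos (mul_pos (exp_pos _) (sub_pos.2 (hsuper y hy))) (by positivity)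

end RiccatiComparison

theorem lt_nu {x : ℝ} (hx : 0 < x) : x < nu x :=
  lt_nu_of_riccati_lt_deriv (u' := fun _ => 1) (fun y _ => hasDerivAt_id y)
    (fun _ hy => hx.trans_le hy) tendsto_id (fun y _ => by simp)

/-- The larger root of `a ↦ 3a² - 4ax + x² - 1`, the factor of the derivative of `ν(ν - x)²`
whose sign is in question. -/
noncomputable def nuUpper (x : ℝ) : ℝ := (2 * x + √(x ^ 2 + 3)) / 3

theorem nuUpper_pos {x : ℝ} (hx : 0 ≤ x) : 0 < nuUpper x := by
  have : 0 < √(x ^ 2 + 3) := by positivity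
  unfold nuUpper; positivity

theorem hasDerivAt_nuUpper (x : ℝ) :
    HasDerivAt nuUpper ((2 + x / √(x ^ 2 + 3)) / 3) x := by
  have h2 : HasDerivAt (fun y => 2 * y) 2 x := by simpa using (hasDerivAt_id x).const_mul 2
  have hsqrt := ((hasDerivAt_pow 2 x).add_const 3).sqrt (by positivity : x ^ 2 + 3 ≠ 0)
  refine ((h2.add hsqrt).div_const 3).congr_deriv ?_
  field_simp
  push_cast
  ring

theorem tendsto_nuUpper_atTop : Tendsto nuUpper atTop atTop := by
  refine tendsto_atTop_mono (fun x => ?_) (tendsto_id.atTop_mul_const (by norm_num : (0:ℝ) < 2 / 3))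
  have := Real.sqrt_nonneg (x ^ 2 + 3)
  unfold nuUpper; simp only [id]; linarith

theorem deriv_nuUpper_lt {x : ℝ} (hx : 0 < x) :
    deriv nuUpper x < 2 * nuUpper x * (nuUpper x - x) := by
  rw [(hasDerivAt_nuUpper x).deriv, nuUpper, div_lt_iff₀ (by norm_num : (0:ℝ) < 3), ← sub_pos]
  set s := √(x ^ 2 + 3)
  have hs : 0 < s := by positivity
  have hs2 : s ^ 2 = x ^ 2 + 3 := Real.sq_sqrt (by positivity)
  have hxs : x < s := by nlinarith
  have key : 2 * ((2 * x + s) / 3) * ((2 * x + s) / 3 - x) * 3 - (2 + x / s)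
      = x * (3 - 2 * x * (s - x)) / (3 * s) := by
    field_simp
    linear_combination (2 * (x + s)) * hs2
  rw [key]
  have : 2 * x * (s - x) < 3 := by nlinarith
  have : 0 < 3 - 2 * x * (s - x) := by linarith
  positivity

theorem nu_lt_nuUpper {x : ℝ} (hx : 0 < x) : nu x < nuUpper x :=
  nu_lt_of_deriv_lt_riccati (fun y _ => (hasDerivAt_nuUpper y).differentiableAt.hasDerivAt)
    (fun _ hy => nuUpper_pos (hx.le.trans hy)) tendsto_nuUpper_atTop
    (fun _ hy => deriv_nuUpper_lt (hx.trans hy))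

theorem hasDerivAt_nu_mul_sub_sq (x : ℝ) :
    HasDerivAt (fun x => nu x * (nu x - x) ^ 2)
      (2 * nu x * (nu x - x) * (3 * nu x ^ 2 - 4 * nu x * x + x ^ 2 - 1)) x := by
  have h := hasDerivAt_nu x
  refine (h.mul ((h.sub (hasDerivAt_id' x)).pow 2)).congr_deriv ?_
  simp only [Pi.pow_apply, Pi.sub_apply, Nat.cast_ofNat]
  ring

theorem quadratic_neg_of_lt_nuUpper {x a : ℝ} (hx : 0 < x) (hxa : x < a) (ha : a < nuUpper x) :
    3 * a ^ 2 - 4 * a * x + x ^ 2 - 1 < 0 := by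
  have hs : 0 < √(x ^ 2 + 3) := by positivity
  have hs2 : √(x ^ 2 + 3) ^ 2 = x ^ 2 + 3 := Real.sq_sqrt (by positivity)
  have hfactor : 3 * a ^ 2 - 4 * a * x + x ^ 2 - 1
      = (3 * a - 2 * x - √(x ^ 2 + 3)) * (3 * a - 2 * x + √(x ^ 2 + 3)) / 3 := by
    linear_combination (1 / 3 : ℝ) * hs2
  rw [hfactor]
  rw [nuUpper] at ha
  have h1 : 3 * a - 2 * x - √(x ^ 2 + 3) < 0 := by linarith
  have h2 : 0 < 3 * a - 2 * x + √(x ^ 2 + 3) := by linarith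
  exact div_neg_of_neg_of_pos (mul_neg_of_neg_of_pos h1 h2) (by norm_num)

theorem strictAntiOn_nu_mul_sub_sq : StrictAntiOn (fun x => nu x * (nu x - x) ^ 2) (Ici 0) := by
  refine strictAntiOn_of_hasDerivWithinAt_neg (convex_Ici 0)
    (fun x _ => (hasDerivAt_nu_mul_sub_sq x).continuousAt.continuousWithinAt)
    (fun x _ => (hasDerivAt_nu_mul_sub_sq x).hasDerivWithinAt) ?_
  rw [interior_Ici]
  intro x hx
  have hxnu := lt_nu hx
  have := nu_pos x
  exact mul_neg_of_pos_of_neg (by nlinarith)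
    (quadratic_neg_of_lt_nuUpper hx hxnu (nu_lt_nuUpper hx))

theorem deriv_nu_sq_div (x : ℝ) : deriv nu x ^ 2 / (4 * nu x) = nu x * (nu x - x) ^ 2 := by
  have := (nu_pos x).ne'
  rw [(hasDerivAt_nu x).deriv]
  field_simp
  ring

theorem nu_zero_pow_three : nu 0 ^ 3 = π ^ (-(3:ℝ) / 2) := by
  rw [nu_zero, Real.sqrt_eq_rpow, ← Real.rpow_neg_one, ← Real.rpow_mul pi_pos.le,
    ← Real.rpow_natCast, ← Real.rpow_mul pi_pos.le]
  norm_num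

theorem nu_localization_bound :
    StrictAntiOn (fun x => nu x * (nu x - x)^2) (Set.Ioi (0:ℝ)) ∧
    sSup ((fun x => (deriv nu x)^2 / (4 * nu x)) '' Set.Ici (0:ℝ)) = nu 0 ^ 3 ∧
    nu 0 ^ 3 = Real.pi ^ (-(3:ℝ)/2) := by
  refine ⟨strictAntiOn_nu_mul_sub_sq.mono Ioi_subset_Ici_self, ?_, nu_zero_pow_three⟩
  simp only [deriv_nu_sq_div]
  refine IsGreatest.csSup_eq ⟨⟨0, self_mem_Ici, by ring⟩, ?_⟩
  rintro _ ⟨x, hx, rfl⟩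
  exact (strictAntiOn_nu_mul_sub_sq.antitoneOn self_mem_Ici hx hx).trans_eq (by ring)
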